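/- arXiv:2201.09770 — 3 statements merged into one kernel-verified Lean document; each statement's English description precedes it below -/
import Mathlib

section
/- Let G be a finite group with supersoluble normal subgroups A and B such that G = AB and the derived subgroup G' is nilpotent. Then G is supersoluble. (Baer's theorem.) -/
/-- A subgroup `H` of `G` is subnormal if there is a chain
`H = c 0 ≤ c 1 ≤ ... ≤ c n = G` with each term normal in the next. -/
def Subgroup.IsSubnormal' {G : Type*} [Group G] (H : Subgroup G) : Prop :=
  ∃ (n : ℕ) (c : Fin (n + 1) → Subgroup G),
    c 0 = H ∧ c (Fin.last n) = ⊤ ∧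
    ∀ i : Fin n, c i.castSucc ≤ c i.succ ∧
      ((c i.castSucc).subgroupOf (c i.succ)).Normal

/-- A group is supersoluble if it has a normal series (all terms normal in `G`)
with cyclic factors; the factor `c (i+1) / c i` being cyclic is expressed as
`c (i+1)` being generated by `c i` together with a single element. -/
def IsSupersolvable (G : Type*) [Group G] : Prop :=
  ∃ (n : ℕ) (c : Fin (n + 1) → Subgroup G),
    c 0 = ⊥ ∧ c (Fin.last n) = ⊤ ∧
    (∀ i, (c i).Normal) ∧
    ∀ i : Fin n, c i.castSucc ≤ c i.succ ∧
      ∃ g ∈ c i.succ, c i.succ ≤ c i.castSucc ⊔ Subgroup.zpowers g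

/-- The Fitting subgroup: the join of all normal nilpotent subgroups
(in a finite group, the largest normal nilpotent subgroup). -/
def fittingSubgroup (G : Type*) [Group G] : Subgroup G :=
  sSup {N : Subgroup G | N.Normal ∧ Group.IsNilpotent N}

instance fittingSubgroup_normal (G : Type*) [Group G] : (fittingSubgroup G).Normal := by
  constructor
  intro x hx g
  rw [fittingSubgroup, sSup_eq_iSup'] at hx ⊢
  refine Subgroup.iSup_induction
    (C := fun y => g * y * g⁻¹ ∈
      ⨆ (N : {N : Subgroup G // N.Normal ∧ Group.IsNilpotent N}), (N : Subgroup G))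
    _ hx (fun N y hy => ?_) (by simpa using Subgroup.one_mem _) (fun y z hy hz => ?_)
  · exact Subgroup.mem_iSup_of_mem N (N.2.1.conj_mem y hy g)
  · simpa [mul_assoc] using Subgroup.mul_mem _ hy hz

/-- `O_p(G)`: the join of all normal `p`-subgroups
(in a finite group, the largest normal `p`-subgroup). -/
def pCore (p : ℕ) (G : Type*) [Group G] : Subgroup G :=
  sSup {N : Subgroup G | N.Normal ∧ IsPGroup p N}

instance pCore_normal (p : ℕ) (G : Type*) [Group G] : (pCore p G).Normal := by
  constructor
  intro x hx g
  rw [pCore, sSup_eq_iSup'] at hx ⊢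
  refine Subgroup.iSup_induction
    (C := fun y => g * y * g⁻¹ ∈
      ⨆ (N : {N : Subgroup G // N.Normal ∧ IsPGroup p N}), (N : Subgroup G))
    _ hx (fun N y hy => ?_) (by simpa using Subgroup.one_mem _) (fun y z hy hz => ?_)
  · exact Subgroup.mem_iSup_of_mem N (N.2.1.conj_mem y hy g)
  · simpa [mul_assoc] using Subgroup.mul_mem _ hy hz

/-- `G` has a Sylow tower of supersoluble type: a normal series `⊥ = c 0 ≤ ... ≤ c n = ⊤`
(all terms normal in `G`) together with strictly decreasing primes `p 0 > p 1 > ... `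
exhausting the primes dividing `|G|`, such that each factor `c (i+1) / c i` is a
Sylow `p i`-subgroup of `G / c i` (i.e. has order the full `p i`-part of `|G|`). -/
def HasSupersolubleSylowTower (G : Type*) [Group G] : Prop :=
  ∃ (n : ℕ) (c : Fin (n + 1) → Subgroup G) (p : Fin n → ℕ),
    c 0 = ⊥ ∧ c (Fin.last n) = ⊤ ∧
    (∀ i, (c i).Normal) ∧
    (∀ i : Fin n, c i.castSucc ≤ c i.succ) ∧
    (∀ i, (p i).Prime) ∧
    (∀ i j : Fin n, i < j → p j < p i) ∧
    (∀ q : ℕ, q.Prime → q ∣ Nat.card G → ∃ i, p i = q) ∧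
    (∀ i : Fin n,
      Nat.card (c i.succ) = Nat.card (c i.castSucc) * p i ^ (Nat.card G).factorization (p i))

/-!
Induction on `|G|`. As `G'` is nilpotent, `G` is soluble, so a minimal normal subgroup `N` of `G`
is abelian. It is also centralized by the nilpotent normal subgroup `G'`: either `N ∩ G' = 1`, or
`N ≤ G'` and then `N ∩ Z(G')` is a nontrivial normal subgroup of `G`, hence all of `N`.
Let `a ∈ A`. If `A ∩ N = 1`, then `a` centralizes `N`. Otherwise `N ≤ A`, and the supersoluble
group `A` normalizes a cyclic subgroup `⟨m⟩ ≠ 1` of `N`, say `a m a⁻¹ = m ^ k`. As `G'` centralizes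
`m`, conjugation by `a` raises every conjugate of `m`, and hence every element of the abelian
group `N` they generate, to the `k`-th power. The same holds for `B`, so every element of `G = AB`
acts on `N` as a power map; then every subgroup of `N` is normal in `G`, and minimality forces `N`
to be cyclic. The hypotheses pass to `G / N`, which is supersoluble by induction, and a
supersoluble series of `G / N` lifts to one of `G` through the cyclic normal subgroup `N`.
-/

open Subgroup
open scoped commutatorElement

section

variable {G H : Type*} [Group G] [Group H]

namespace Subgroup

theorem comap_sup_zpowers {f : G →* H} (hf : Function.Surjective f) (D : Subgroup H) (g : G) :
    (D ⊔ zpowers (f g)).comap f = D.comap f ⊔ zpowers g := by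
  conv_lhs => rw [← map_comap_eq_self_of_surjective hf D, ← MonoidHom.map_zpowers, ← map_sup]
  rw [comap_map_eq, sup_eq_left]
  exact le_sup_of_le_left (MonoidHom.ker_le_comap f D)

theorem isCyclic_of_inf_eq_bot_of_le_sup_zpowers {D K : Subgroup G} [D.Normal] {g : G}
    (hKD : K ⊓ D = ⊥) (hK : K ≤ D ⊔ zpowers g) : IsCyclic K := by
  let π := QuotientGroup.mk' D
  have hKπ : ∀ x : K, π x ∈ zpowers (π g) := fun x => by
    have := mem_map_of_mem π (hK x.2)
    rwa [Subgroup.map_sup, MonoidHom.map_zpowers,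
      (map_eq_bot_iff _).mpr (by rw [QuotientGroup.ker_mk']), bot_sup_eq] at this
  refine isCyclic_of_injective ((π.comp K.subtype).codRestrict _ hKπ) ?_
  refine (injective_iff_map_eq_one _).mpr fun x hx => ?_
  have hxD : (x : G) ∈ D := by
    rw [← QuotientGroup.eq_one_iff]
    exact congrArg Subtype.val hx
  have : (x : G) ∈ K ⊓ D := ⟨x.2, hxD⟩
  rw [hKD, mem_bot] at this
  exact Subtype.ext this

theorem subgroupOf_ne_bot {N K : Subgroup G} (hN : N ≠ ⊥) (hNK : N ≤ K) :
    N.subgroupOf K ≠ ⊥ := by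
  rwa [Ne, subgroupOf_eq_bot, disjoint_of_le_iff_left_eq_bot hNK]

theorem card_quotient_lt [Finite G] {N : Subgroup G} [N.Normal] (hN : N ≠ ⊥) :
    Nat.card (G ⧸ N) < Nat.card G := by
  rw [card_eq_card_quotient_mul_card_subgroup N]
  exact lt_mul_of_one_lt_right Nat.card_pos (N.one_lt_card_iff_ne_bot.mpr hN)

theorem inf_upperCentralSeries_eq_bot_of_inf_center_eq_bot {N : Subgroup G} [N.Normal]
    (h : N ⊓ center G = ⊥) (m : ℕ) : N ⊓ upperCentralSeries G m = ⊥ := by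
  induction m with
  | zero => simp
  | succ m ih =>
    refine le_bot_iff.mp fun (x : G) ⟨hxN, hx⟩ => h ▸ ⟨hxN, mem_center_iff.mpr fun y => ?_⟩
    have hc : ⁅x, y⁆ ∈ N ⊓ upperCentralSeries G m :=
      ⟨commutator_le_left N ⊤ (commutator_mem_commutator hxN (mem_top y)),
        mem_upperCentralSeries_succ_iff.mp hx y⟩
    rw [ih, mem_bot, commutatorElement_eq_one_iff_mul_comm] at hc
    exact hc.symm

theorem inf_center_ne_bot [Group.IsNilpotent G] {N : Subgroup G} [N.Normal] (hN : N ≠ ⊥) :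
    N ⊓ center G ≠ ⊥ := fun h => by
  obtain ⟨n, hn⟩ := Group.IsNilpotent.nilpotent G
  simpa [hn, hN] using inf_upperCentralSeries_eq_bot_of_inf_center_eq_bot h n

end Subgroup

theorem Group.isSolvable_of_isSolvable_commutator [Group.IsSolvable (commutator G)] :
    Group.IsSolvable G :=
  (isSolvable_iff_subgroup_quotient (commutator G)).mpr
    ⟨inferInstance, (inferInstance : Group.IsSolvable (Abelianization G))⟩

theorem Group.isNilpotent_commutator_of_surjective {f : G →* H} (hf : Function.Surjective f)
    [Group.IsNilpotent (commutator G)] : Group.IsNilpotent (commutator H) := by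
  have hG' : (commutator G).map f = commutator H := by
    rw [map_commutator_eq, f.range_eq_top_of_surjective hf, commutator_def]
  exact hG' ▸ Group.nilpotent_of_surjective (f.subgroupMap _) (f.subgroupMap_surjective _)

namespace IsSupersolvable

theorem of_subsingleton [Subsingleton G] : IsSupersolvable G :=
  ⟨0, fun _ => ⊥, rfl, Subsingleton.elim _ _, fun _ => inferInstance, fun i => i.elim0⟩

theorem of_surjective {f : G →* H} (hf : Function.Surjective f) (h : IsSupersolvable G) :
    IsSupersolvable H := by
  obtain ⟨n, c, h0, hl, hnorm, hstep⟩ := h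
  refine ⟨n, fun i => (c i).map f, by simp [h0], by simp [hl, map_top_of_surjective f hf],
    fun i => (hnorm i).map f hf, fun i => ?_⟩
  obtain ⟨hle, g, hg, hgen⟩ := hstep i
  refine ⟨map_mono hle, f g, mem_map_of_mem f hg, ?_⟩
  simpa only [Subgroup.map_sup, MonoidHom.map_zpowers] using map_mono (f := f) hgen

theorem of_quotient_zpowers {N : Subgroup G} [N.Normal] {x : G} (hN : N = zpowers x)
    (h : IsSupersolvable (G ⧸ N)) : IsSupersolvable G := by
  obtain ⟨n, d, h0, hl, hnorm, hstep⟩ := h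
  let π := QuotientGroup.mk' N
  have hπ : Function.Surjective π := QuotientGroup.mk'_surjective N
  refine ⟨n + 1, Fin.cons ⊥ fun j => (d j).comap π, rfl, ?_, ?_, ?_⟩
  · simp [← Fin.succ_last, hl]
  · refine Fin.cases ?_ fun j => ?_
    · exact normal_bot
    · exact (hnorm j).comap π
  refine Fin.cases ?_ fun j => ?_
  · simp only [Fin.castSucc_zero, Fin.cons_zero, Fin.cons_succ, h0, MonoidHom.comap_bot, π,
      QuotientGroup.ker_mk', bot_le, bot_sup_eq, true_and]
    exact ⟨x, hN ▸ mem_zpowers x, hN.le⟩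
  · rw [← Fin.succ_castSucc]
    simp only [Fin.cons_succ]
    obtain ⟨hle, g, hg, hgen⟩ := hstep j
    obtain ⟨g', rfl⟩ := hπ g
    exact ⟨comap_mono hle, g', hg, (comap_mono hgen).trans (comap_sup_zpowers hπ _ g').le⟩

theorem exists_normal_zpowers (h : IsSupersolvable G) {K : Subgroup G} [K.Normal] (hK : K ≠ ⊥) :
    ∃ m ∈ K, m ≠ 1 ∧ (zpowers m).Normal := by
  obtain ⟨n, c, h0, hl, hnorm, hstep⟩ := h
  -- The first term `c i` meeting `K` nontrivially meets it in a cyclic group, which embeds in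
  -- the cyclic factor `c i / c (i - 1)`.
  suffices ∀ i, c i ⊓ K = ⊥ ∨ ∃ m ∈ K, m ≠ 1 ∧ (zpowers m).Normal by
    simpa [hl, hK] using this (Fin.last n)
  refine Fin.induction (by simp [h0]) fun i ih => ih.elim (fun hbot => ?_) Or.inr
  obtain ⟨-, g, -, hgen⟩ := hstep i
  have := hnorm i.castSucc
  have := hnorm i.succ
  have hL : IsCyclic ↥(c i.succ ⊓ K) := by
    refine isCyclic_of_inf_eq_bot_of_le_sup_zpowers (le_bot_iff.mp ?_) (inf_le_left.trans hgen)
    rw [← hbot]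
    exact le_inf inf_le_right (inf_le_left.trans inf_le_right)
  obtain ⟨m, hm⟩ := (c i.succ ⊓ K).isCyclic_iff_exists_zpowers_eq_top.mp hL
  rcases eq_or_ne m 1 with rfl | hm1
  · exact Or.inl (by rw [← hm, zpowers_one_eq_bot])
  · refine Or.inr ⟨m, (hm ▸ mem_zpowers m : m ∈ c i.succ ⊓ K).2, hm1, ?_⟩
    rw [hm]
    infer_instance

end IsSupersolvable

def InducesPowerAut (g : G) (N : Subgroup G) : Prop :=
  ∃ k : ℤ, ∀ x ∈ N, g * x * g⁻¹ = x ^ k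

namespace InducesPowerAut

variable {N : Subgroup G}

theorem of_mem_centralizer {g : G} (hg : g ∈ centralizer N) : InducesPowerAut g N :=
  ⟨1, fun x hx => by rw [← mem_centralizer_iff.mp hg x hx, mul_inv_cancel_right, zpow_one]⟩

theorem mul {a b : G} (ha : InducesPowerAut a N) (hb : InducesPowerAut b N) :
    InducesPowerAut (a * b) N := by
  obtain ⟨k, hk⟩ := ha
  obtain ⟨l, hl⟩ := hb
  refine ⟨l * k, fun x hx => ?_⟩
  rw [show a * b * x * (a * b)⁻¹ = a * (b * x * b⁻¹) * a⁻¹ by group, hl x hx,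
    hk _ (zpow_mem hx l), zpow_mul]

theorem zpowers_normal (h : ∀ g : G, InducesPowerAut g N) {x : G} (hx : x ∈ N) :
    (zpowers x).Normal where
  conj_mem y hy g := by
    obtain ⟨k, hk⟩ := h g
    obtain ⟨j, rfl⟩ := mem_zpowers_iff.mp hy
    rw [← conj_zpow, hk x hx, ← zpow_mul]
    exact zpow_mem (mem_zpowers x) _

/-- For a conjugate `g m g⁻¹` of `m`, the conjugations by `a` and by `g` commute up to the
commutator `⁅a⁻¹, g⁻¹⁆`, which centralizes `m`. -/
theorem normalClosure_singleton {a m : G} (hNN : ⁅normalClosure {m}, normalClosure {m}⁆ = ⊥)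
    (hm : m ∈ centralizer (commutator G)) (ham : a * m * a⁻¹ ∈ zpowers m) :
    InducesPowerAut a (normalClosure {m}) := by
  obtain ⟨k, hk⟩ := mem_zpowers_iff.mp ham
  refine ⟨k, fun x hx => ?_⟩
  have hcomm := commutator_eq_bot_iff_le_centralizer.mp hNN
  induction hx using closure_induction with
  | mem x hx =>
    obtain ⟨_, hm', hconj⟩ := Group.mem_conjugatesOfSet_iff.mp hx
    obtain ⟨g, rfl⟩ := isConj_iff.mp (Set.mem_singleton_iff.mp hm' ▸ hconj)
    have hcm : ⁅a⁻¹, g⁻¹⁆ * m = m * ⁅a⁻¹, g⁻¹⁆ := mem_centralizer_iff.mp hm _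
      (commutator_mem_commutator (mem_top a⁻¹) (mem_top g⁻¹))
    calc a * (g * m * g⁻¹) * a⁻¹ = g * a * (⁅a⁻¹, g⁻¹⁆ * m * ⁅a⁻¹, g⁻¹⁆⁻¹) * a⁻¹ * g⁻¹ := by
          simp only [commutatorElement_def]; group
      _ = g * m ^ k * g⁻¹ := by rw [hcm, mul_inv_cancel_right, hk]; group
      _ = (g * m * g⁻¹) ^ k := (conj_zpow ..).symm
  | one => simp
  | mul x y hx hy ihx ihy =>
    have hxy : Commute x y := mem_centralizer_iff.mp (hcomm hy) x hx
    rw [show a * (x * y) * a⁻¹ = a * x * a⁻¹ * (a * y * a⁻¹) by group, ihx, ihy, hxy.mul_zpow]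
  | inv x hx ih => rw [show a * x⁻¹ * a⁻¹ = (a * x * a⁻¹)⁻¹ by group, ih, inv_zpow]

end InducesPowerAut

def Subgroup.IsMinimalNormal (N : Subgroup G) : Prop :=
  Minimal (fun M : Subgroup G => M.Normal ∧ M ≠ ⊥) N

theorem Subgroup.exists_isMinimalNormal [Finite G] [Nontrivial G] :
    ∃ N : Subgroup G, N.IsMinimalNormal :=
  (Set.toFinite {M : Subgroup G | M.Normal ∧ M ≠ ⊥}).exists_minimal ⟨⊤, inferInstance, top_ne_bot⟩

namespace Subgroup.IsMinimalNormal

variable {N : Subgroup G}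

theorem normal (hN : N.IsMinimalNormal) : N.Normal := hN.prop.1

theorem ne_bot (hN : N.IsMinimalNormal) : N ≠ ⊥ := hN.prop.2

theorem eq_of_le (hN : N.IsMinimalNormal) {M : Subgroup G} [M.Normal] (hM : M ≠ ⊥)
    (hMN : M ≤ N) : M = N :=
  Minimal.eq_of_le hN ⟨inferInstance, hM⟩ hMN

theorem le_or_inf_eq_bot (hN : N.IsMinimalNormal) (K : Subgroup G) [K.Normal] :
    N ≤ K ∨ K ⊓ N = ⊥ := by
  have := hN.normal
  by_cases h : K ⊓ N = ⊥
  · exact Or.inr h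
  · exact Or.inl (inf_eq_right.mp (hN.eq_of_le h inf_le_right))

theorem commutator_self_eq_bot [Group.IsSolvable G] (hN : N.IsMinimalNormal) : ⁅N, N⁆ = ⊥ := by
  have := hN.normal
  by_contra h
  exact (Group.IsSolvable.commutator_lt_of_ne_bot hN.ne_bot).ne
    (hN.eq_of_le h (commutator_le_left N N))

theorem le_centralizer_of_isNilpotent (hN : N.IsMinimalNormal) (K : Subgroup G) [K.Normal]
    [Group.IsNilpotent K] : N ≤ centralizer K := by
  have := hN.normal
  rcases hN.le_or_inf_eq_bot K with hNK | hKN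
  · obtain ⟨z, ⟨hzN, hzZ⟩, hz1⟩ := (N.subgroupOf K ⊓ center K).bot_or_exists_ne_one.resolve_left
      (inf_center_ne_bot (subgroupOf_ne_bot hN.ne_bot hNK))
    have hzC : (z : G) ∈ N ⊓ centralizer K := ⟨mem_subgroupOf.mp hzN,
      mem_centralizer_iff.mpr fun h hh => congrArg Subtype.val (mem_center_iff.mp hzZ ⟨h, hh⟩)⟩
    have hC : N ⊓ centralizer K ≠ ⊥ := fun h => hz1 (Subtype.ext (mem_bot.mp (h ▸ hzC)))
    exact inf_eq_left.mp (hN.eq_of_le hC inf_le_left)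
  · exact commutator_eq_bot_iff_le_centralizer.mp
      (le_bot_iff.mp (hKN ▸ inf_comm K N ▸ commutator_le_inf N K))

theorem inducesPowerAut_of_isSupersolvable (hN : N.IsMinimalNormal) (hNN : ⁅N, N⁆ = ⊥)
    (hNc : N ≤ centralizer (_root_.commutator G)) {A : Subgroup G} [A.Normal]
    (hA : IsSupersolvable A) {a : G} (ha : a ∈ A) : InducesPowerAut a N := by
  have := hN.normal
  rcases hN.le_or_inf_eq_bot A with hNA | hAN
  · obtain ⟨m, hmN, hm1, hmA⟩ := hA.exists_normal_zpowers (subgroupOf_ne_bot hN.ne_bot hNA)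
    have hmN' : (m : G) ∈ N := mem_subgroupOf.mp hmN
    have hcl : normalClosure {(m : G)} = N := by
      refine hN.eq_of_le ?_ (normalClosure_le_normal (Set.singleton_subset_iff.mpr hmN'))
      rw [Ne, normalClosure_eq_bot_iff, Set.singleton_subset_iff, Set.mem_singleton_iff]
      exact_mod_cast hm1
    have ham : a * m * a⁻¹ ∈ zpowers (m : G) := by
      have := mem_map_of_mem A.subtype (hmA.conj_mem m (mem_zpowers m) ⟨a, ha⟩)
      rwa [MonoidHom.map_zpowers] at this
    rw [← hcl] at hNN ⊢
    exact .normalClosure_singleton hNN (hNc hmN') ham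
  · refine .of_mem_centralizer (commutator_eq_bot_iff_le_centralizer.mp ?_ ha)
    exact le_bot_iff.mp (hAN ▸ commutator_le_inf A N)

theorem exists_eq_zpowers (hN : N.IsMinimalNormal) {A B : Subgroup G} [A.Normal] [B.Normal]
    (hA : IsSupersolvable A) (hB : IsSupersolvable B)
    (hAB : ∀ g : G, ∃ a ∈ A, ∃ b ∈ B, g = a * b) [Group.IsNilpotent (_root_.commutator G)] :
    ∃ x, N = zpowers x := by
  have := hN.normal
  have := Group.isSolvable_of_isSolvable_commutator (G := G)
  have hNN := hN.commutator_self_eq_bot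
  have hNc := hN.le_centralizer_of_isNilpotent (_root_.commutator G)
  have hpow : ∀ g, InducesPowerAut g N := fun g => by
    obtain ⟨a, ha, b, hb, rfl⟩ := hAB g
    exact (hN.inducesPowerAut_of_isSupersolvable hNN hNc hA ha).mul
      (hN.inducesPowerAut_of_isSupersolvable hNN hNc hB hb)
  obtain ⟨x, hxN, hx1⟩ := N.bot_or_exists_ne_one.resolve_left hN.ne_bot
  have := InducesPowerAut.zpowers_normal hpow hxN
  exact ⟨x, (hN.eq_of_le (zpowers_ne_bot.mpr hx1) (zpowers_le.mpr hxN)).symm⟩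

end Subgroup.IsMinimalNormal

end

/-- Baer's theorem: if `G = AB` with `A`, `B` normal supersoluble subgroups and
the derived subgroup of `G` nilpotent, then `G` is supersoluble. -/
theorem stmt_5 {G : Type*} [Group G] [Finite G] (A B : Subgroup G)
    (hA : A.Normal) (hB : B.Normal)
    (hAs : IsSupersolvable A) (hBs : IsSupersolvable B)
    (hprod : ∀ g : G, ∃ a ∈ A, ∃ b ∈ B, g = a * b)
    (hG' : Group.IsNilpotent (commutator G)) :
    IsSupersolvable G := by
  induction hn : Nat.card G using Nat.strong_induction_on generalizing G with
  | _ n ih =>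
    rcases subsingleton_or_nontrivial G with _ | _
    · exact .of_subsingleton
    obtain ⟨N, hN⟩ := exists_isMinimalNormal (G := G)
    obtain ⟨x, hx⟩ := hN.exists_eq_zpowers hAs hBs hprod
    have := hN.normal
    let π := QuotientGroup.mk' N
    have hπ : Function.Surjective π := QuotientGroup.mk'_surjective N
    have hprod' : ∀ q : G ⧸ N, ∃ a ∈ A.map π, ∃ b ∈ B.map π, q = a * b := fun q => by
      obtain ⟨g, rfl⟩ := hπ q
      obtain ⟨a, ha, b, hb, rfl⟩ := hprod g
      exact ⟨π a, mem_map_of_mem π ha, π b, mem_map_of_mem π hb, map_mul π a b⟩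
    exact .of_quotient_zpowers hx <| ih _ (hn ▸ card_quotient_lt hN.ne_bot) (A.map π) (B.map π)
      (hA.map π hπ) (hB.map π hπ) (hAs.of_surjective (π.subgroupMap_surjective A))
      (hBs.of_surjective (π.subgroupMap_surjective B)) hprod'
      (Group.isNilpotent_commutator_of_surjective hπ) rfl
end

section
/- Let G be a finite group generated by two abelian subnormal subgroups A and B. Then G is nilpotent. -/
/-!
A subnormal `p`-subgroup lies in `O_p(G)`: if `H` is normal in `K`, then `O_p(H)` is normalized
by `K`, so `O_p(H) ≤ O_p(K)`, and one climbs the subnormal chain up to `O_p(G)`.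
An abelian group is generated by its Sylow subgroups, each normal in it, so an abelian subnormal
subgroup lies in the join of the `O_p(G)`. Hence `G = A ⊔ B` is this join; the `O_p(G)` for
distinct `p` are normal with trivial intersection, so they commute, and `G` is a quotient of
their direct product, which is nilpotent.
-/

open Subgroup

section

variable {G : Type*} [Group G]

theorem Subgroup.IsSubnormal'.isSubnormal {H : Subgroup G} (hH : H.IsSubnormal') :
    H.IsSubnormal := by
  obtain ⟨n, c, rfl, hlast, hc⟩ := hH
  induction n with
  | zero => exact hlast ▸ IsSubnormal.top
  | succ n ih =>
    exact IsSubnormal.step _ (c 1) (hc 0).1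
      (ih (fun i => c i.succ) hlast fun i => hc i.succ) (hc 0).2

theorem le_pCore {p : ℕ} {N : Subgroup G} (hN : N.Normal) (hp : IsPGroup p N) :
    N ≤ pCore p G :=
  le_sSup ⟨hN, hp⟩

theorem isPGroup_pCore {p : ℕ} : IsPGroup p (pCore p G) :=
  Sylow.sSup_of_normal _ (fun _ hN => hN.2) fun _ hN => hN.1

namespace Subgroup

variable {p : ℕ} {H N : Subgroup G}

def relPCoreSet (p : ℕ) (H : Subgroup G) : Set (Subgroup G) :=
  {N | IsPGroup p N ∧ N ≤ H ∧ H ≤ normalizer (N : Set G)}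

/-- `O_p(H)`, the largest normal `p`-subgroup of `H` (for finite `G`), as a subgroup of `G`. -/
def relPCore (p : ℕ) (H : Subgroup G) : Subgroup G :=
  sSup (relPCoreSet p H)

theorem le_relPCore (hN : N ∈ relPCoreSet p H) : N ≤ relPCore p H :=
  le_sSup hN

theorem supClosed_relPCoreSet : SupClosed (relPCoreSet p H) := by
  rintro N ⟨hNp, hNH, hHN⟩ M ⟨hMp, hMH, hHM⟩
  exact ⟨hNp.to_sup_of_normal_right' hMp (hNH.trans hHM), sup_le hNH hMH,
    le_inf hHN hHM |>.trans (normalizer_inf_normalizer_le_normalizer_sup N M)⟩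

theorem relPCore_mem_relPCoreSet [Finite G] : relPCore p H ∈ relPCoreSet p H :=
  supClosed_relPCoreSet.sSup_mem (Set.toFinite _) ⟨.of_bot, bot_le, le_normalizer_of_normal⟩
    subset_rfl

theorem map_conj_mem_relPCoreSet {g : G} (hg : g ∈ normalizer (H : Set G))
    (hN : N ∈ relPCoreSet p H) :
    N.map (MulAut.conj g).toMonoidHom ∈ relPCoreSet p H := by
  obtain ⟨hNp, hNH, hHN⟩ := hN
  have hHg : H.map (MulAut.conj g).toMonoidHom = H := mem_normalizer_iff_map_conj_eq.mp hg
  refine ⟨hNp.map _, hHg ▸ map_mono hNH, ?_⟩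
  calc H = H.map (MulAut.conj g).toMonoidHom := hHg.symm
    _ ≤ (normalizer (N : Set G)).map (MulAut.conj g).toMonoidHom := map_mono hHN
    _ ≤ _ := le_normalizer_map _

theorem normalizer_le_normalizer_relPCore [Finite G] :
    normalizer (H : Set G) ≤ normalizer (relPCore p H : Set G) :=
  le_normalizer_iff.mpr fun _ hg _ hx =>
    le_relPCore (map_conj_mem_relPCoreSet hg relPCore_mem_relPCoreSet) (mem_map_of_mem _ hx)

theorem IsSubnormal.relPCore_le_pCore [Finite G] (hH : H.IsSubnormal) :
    relPCore p H ≤ pCore p G := by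
  induction hH with
  | top =>
    obtain ⟨hp, -, hnorm⟩ := relPCore_mem_relPCoreSet (p := p) (H := (⊤ : Subgroup G))
    exact le_pCore (normalizer_eq_top_iff.mp (top_le_iff.mp hnorm)) hp
  | step H K hHK _ hHn ih =>
    obtain ⟨hp, hle, -⟩ := relPCore_mem_relPCoreSet (p := p) (H := H)
    refine le_trans (le_relPCore ⟨hp, hle.trans hHK, ?_⟩) ih
    exact ((normal_subgroupOf_iff_le_normalizer hHK).mp hHn).trans
      normalizer_le_normalizer_relPCore

theorem IsSubnormal.le_pCore [Finite G] (hH : H.IsSubnormal) (hp : IsPGroup p H) :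
    H ≤ pCore p G :=
  le_trans (le_relPCore ⟨hp, le_rfl, le_normalizer⟩) hH.relPCore_le_pCore

end Subgroup

theorem Subgroup.eq_top_of_forall_exists_sylow_le [Finite G] {J : Subgroup G}
    (h : ∀ p, p.Prime → p ∣ Nat.card G → ∃ P : Sylow p G, (P : Subgroup G) ≤ J) :
    J = ⊤ := by
  refine index_eq_one.mp (Nat.eq_one_iff_not_exists_prime_dvd.mpr fun p hp hpJ => ?_)
  have : Fact p.Prime := ⟨hp⟩
  obtain ⟨P, hPJ⟩ := h p hp (hpJ.trans J.index_dvd_card)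
  exact P.not_dvd_index (hpJ.trans (index_dvd_of_le hPJ))

theorem Subgroup.IsSubnormal.le_iSup_pCore [Finite G] {C : Subgroup G} [IsMulCommutative C]
    (hC : C.IsSubnormal) : C ≤ ⨆ p : (Nat.card G).primeFactors, pCore p G := by
  rw [← subgroupOf_eq_top]
  refine eq_top_of_forall_exists_sylow_le fun p hp hpC => ?_
  have : Fact p.Prime := ⟨hp⟩
  obtain ⟨P⟩ := (inferInstance : Nonempty (Sylow p C))
  have hpG : p ∈ (Nat.card G).primeFactors :=
    Nat.mem_primeFactors.mpr ⟨hp, hpC.trans (card_subgroup_dvd_card C), Nat.card_pos.ne'⟩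
  have hPsub : ((P : Subgroup C).map C.subtype).IsSubnormal :=
    (normal_of_isMulCommutative (P : Subgroup C)).isSubnormal.trans' hC
  exact ⟨P, fun x hx => le_iSup (fun p : (Nat.card G).primeFactors => pCore p G) ⟨p, hpG⟩
      (hPsub.le_pCore (P.isPGroup'.map _) (mem_map_of_mem _ hx))⟩

theorem Group.isNilpotent_of_iSup_eq_top {ι : Type*} [Fintype ι] {H : ι → Subgroup G}
    (hcomm : Pairwise fun i j => ∀ x y : G, x ∈ H i → y ∈ H j → Commute x y)
    [∀ i, Group.IsNilpotent (H i)] (htop : ⨆ i, H i = ⊤) : Group.IsNilpotent G :=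
  Group.nilpotent_of_surjective (noncommPiCoprod hcomm)
    (MonoidHom.range_eq_top.mp (noncommPiCoprod_range.trans htop))

theorem isNilpotent_of_iSup_pCore_eq_top [Finite G]
    (h : ⨆ p : (Nat.card G).primeFactors, pCore p G = ⊤) : Group.IsNilpotent G := by
  have (p : (Nat.card G).primeFactors) : Fact p.1.Prime := ⟨Nat.prime_of_mem_primeFactors p.2⟩
  have (p : (Nat.card G).primeFactors) : Group.IsNilpotent (pCore p G) :=
    isPGroup_pCore.isNilpotent
  refine Group.isNilpotent_of_iSup_eq_top (fun p q hpq => ?_) h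
  exact commute_of_normal_of_disjoint _ _ inferInstance inferInstance
    (IsPGroup.disjoint_of_ne p q (Subtype.coe_ne_coe.mpr hpq) _ _ isPGroup_pCore isPGroup_pCore)

end

/-- A finite group generated by two abelian subnormal subgroups is nilpotent. -/
theorem stmt_13 {G : Type*} [Group G] [Finite G] (A B : Subgroup G)
    (hA : A.IsSubnormal') (hB : B.IsSubnormal')
    (hAc : IsMulCommutative A) (hBc : IsMulCommutative B)
    (hgen : A ⊔ B = ⊤) :
    Group.IsNilpotent G := by
  refine isNilpotent_of_iSup_pCore_eq_top (top_le_iff.mp ?_)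
  rw [← hgen]
  exact sup_le hA.isSubnormal.le_iSup_pCore hB.isSubnormal.le_iSup_pCore
end

section
/- Let A be a supersoluble subnormal subgroup of a finite group G with G' ≤ F(G) and AG' normal in G. Then AG' is supersoluble. -/
/-!
Put `U = A ⊔ G'`. Inside `U`, the subgroup `B = A ∩ U` is subnormal and supersoluble, and
`M = G' ∩ U` is normal and nilpotent, since `F(G)` is nilpotent by Fitting's theorem; moreover
`U = BM`. These properties pass to every quotient of `U`, so it suffices to find a nontrivial
cyclic normal subgroup in every nontrivial group `Q = BM` of this kind.
Let `V` be a minimal normal subgroup of `Q`. As `M` is nilpotent, `[V, M] = 1`, so every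
`B`-invariant subgroup of `V` is normal in `Q = BM`. In particular `[V, B]` is `1` or `V`. In the
first case `V` is central, hence cyclic. In the second, `V = [V, B, …, B] ≤ B` by subnormality
of `B`, so `V` is a minimal normal subgroup of the supersoluble group `B`, hence cyclic.
-/

open Subgroup

namespace Subgroup

variable {G : Type*} [Group G]

lemma commutator_le_iff_map_le_centralizer {H K N : Subgroup G} [N.Normal] :
    ⁅H, K⁆ ≤ N ↔
      H.map (QuotientGroup.mk' N) ≤ centralizer (K.map (QuotientGroup.mk' N)) := by
  rw [← commutator_eq_bot_iff_le_centralizer, ← map_commutator, map_eq_bot_iff,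
    QuotientGroup.ker_mk']

lemma iSup_commutator_le {ι : Sort*} {H : ι → Subgroup G} {K N : Subgroup G} [N.Normal]
    (h : ∀ i, ⁅H i, K⁆ ≤ N) : ⁅⨆ i, H i, K⁆ ≤ N := by
  simp only [commutator_le_iff_map_le_centralizer, map_iSup, iSup_le_iff] at h ⊢
  exact h

lemma commutator_sup_le {H K₁ K₂ N : Subgroup G} [N.Normal] (h₁ : ⁅H, K₁⁆ ≤ N)
    (h₂ : ⁅H, K₂⁆ ≤ N) : ⁅H, K₁ ⊔ K₂⁆ ≤ N := by
  rw [commutator_comm] at h₁ h₂ ⊢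
  rw [commutator_le_iff_map_le_centralizer] at h₁ h₂ ⊢
  rw [map_sup]
  exact sup_le h₁ h₂

def iteratedCommutator (N : Subgroup G) : ℕ → Subgroup G
  | 0 => ⊤
  | n + 1 => ⁅iteratedCommutator N n, N⁆

@[simp]
lemma iteratedCommutator_zero (N : Subgroup G) : iteratedCommutator N 0 = ⊤ := rfl

lemma iteratedCommutator_succ (N : Subgroup G) (n : ℕ) :
    iteratedCommutator N (n + 1) = ⁅iteratedCommutator N n, N⁆ := rfl

instance iteratedCommutator_normal (N : Subgroup G) [N.Normal] (n : ℕ) :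
    (iteratedCommutator N n).Normal := by
  induction n with
  | zero => rw [iteratedCommutator_zero]; infer_instance
  | succ n _ => rw [iteratedCommutator_succ]; infer_instance

lemma iteratedCommutator_mono {N N' : Subgroup G} (h : N ≤ N') (n : ℕ) :
    iteratedCommutator N n ≤ iteratedCommutator N' n := by
  induction n with
  | zero => exact le_rfl
  | succ n ih => exact commutator_mono ih h

lemma iteratedCommutator_antitone (N : Subgroup G) [N.Normal] :
    Antitone (iteratedCommutator N) :=
  antitone_nat_of_succ_le fun _ => commutator_le_left _ _

lemma lowerCentralSeries_le_iteratedCommutator (N : Subgroup G) (n : ℕ) :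
    N.lowerCentralSeries n ≤ iteratedCommutator N n := by
  induction n with
  | zero => exact le_top
  | succ n ih => exact commutator_mono ih le_rfl

lemma iteratedCommutator_succ_le_lowerCentralSeries (N : Subgroup G) [N.Normal] (n : ℕ) :
    iteratedCommutator N (n + 1) ≤ N.lowerCentralSeries n := by
  induction n with
  | zero => exact commutator_le_right _ _
  | succ n ih => exact commutator_mono ih le_rfl

lemma isNilpotent_iff_exists_iteratedCommutator_eq_bot (N : Subgroup G) [N.Normal] :
    Group.IsNilpotent N ↔ ∃ n, iteratedCommutator N n = ⊥ := by
  rw [isNilpotent_iff_lowerCentralSeries]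
  constructor
  · rintro ⟨n, hn⟩
    exact ⟨n + 1, le_bot_iff.mp (hn ▸ iteratedCommutator_succ_le_lowerCentralSeries N n)⟩
  · rintro ⟨n, hn⟩
    exact ⟨n, le_bot_iff.mp (hn ▸ lowerCentralSeries_le_iteratedCommutator N n)⟩

section Fitting

variable (N₁ N₂ : Subgroup G) [N₁.Normal] [N₂.Normal]

lemma iteratedCommutator_sup_le (k : ℕ) :
    iteratedCommutator (N₁ ⊔ N₂) k ≤
      ⨆ (p : ℕ × ℕ) (_ : p.1 + p.2 = k),
        iteratedCommutator N₁ p.1 ⊓ iteratedCommutator N₂ p.2 := by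
  induction k with
  | zero => exact le_iSup₂_of_le (0, 0) rfl (by simp)
  | succ k ih =>
    refine (commutator_mono ih le_rfl).trans
      (iSup_commutator_le fun p => iSup_commutator_le fun hp => ?_)
    refine commutator_sup_le ?_ ?_
    · refine le_iSup₂_of_le (p.1 + 1, p.2) (by omega) (le_inf ?_ ?_)
      · exact commutator_mono inf_le_left le_rfl
      · exact (commutator_mono inf_le_right le_rfl).trans (commutator_le_left _ _)
    · refine le_iSup₂_of_le (p.1, p.2 + 1) (by omega) (le_inf ?_ ?_)
      · exact (commutator_mono inf_le_left le_rfl).trans (commutator_le_left _ _)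
      · exact commutator_mono inf_le_right le_rfl

lemma isNilpotent_sup (h₁ : Group.IsNilpotent N₁) (h₂ : Group.IsNilpotent N₂) :
    Group.IsNilpotent ↥(N₁ ⊔ N₂) := by
  rw [isNilpotent_iff_exists_iteratedCommutator_eq_bot] at h₁ h₂ ⊢
  obtain ⟨a, ha⟩ := h₁
  obtain ⟨b, hb⟩ := h₂
  refine ⟨a + b, le_bot_iff.mp ((iteratedCommutator_sup_le N₁ N₂ _).trans
    (iSup₂_le fun p hp => ?_))⟩
  rcases le_or_gt a p.1 with hap | hpa
  · exact inf_le_left.trans (ha ▸ iteratedCommutator_antitone N₁ hap)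
  · exact inf_le_right.trans (hb ▸ iteratedCommutator_antitone N₂ (by omega))

end Fitting

lemma isNilpotent_of_le {H N : Subgroup G} (h : H ≤ N) (hN : Group.IsNilpotent N) :
    Group.IsNilpotent H := by
  rw [isNilpotent_iff_lowerCentralSeries] at hN ⊢
  obtain ⟨n, hn⟩ := hN
  exact ⟨n, le_bot_iff.mp (hn ▸ lowerCentralSeries_mono n h)⟩

lemma IsSubnormal'.isSubnormal_s14 {H : Subgroup G} (h : H.IsSubnormal') : H.IsSubnormal := by
  obtain ⟨n, c, rfl, hlast, hstep⟩ := h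
  induction (0 : Fin (n + 1)) using Fin.reverseInduction with
  | last => exact hlast ▸ IsSubnormal.top
  | cast i ih => exact IsSubnormal.step _ _ (hstep i).1 ih (hstep i).2

lemma IsSubnormal.exists_iteratedCommutator_le {H : Subgroup G} (h : H.IsSubnormal) :
    ∃ r, iteratedCommutator H r ≤ H := by
  induction h with
  | top => exact ⟨0, le_top⟩
  | step H K hHK _ hN ih =>
    obtain ⟨r, hr⟩ := ih
    have hKH : ⁅K, H⁆ ≤ H :=
      le_normalizer_iff_commutator_le_right.mp ((normal_subgroupOf_iff_le_normalizer hHK).mp hN)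
    exact ⟨r + 1, (commutator_mono ((iteratedCommutator_mono hHK r).trans hr) le_rfl).trans hKH⟩

lemma IsSubnormal.le_of_le_commutator {B V : Subgroup G} (hB : B.IsSubnormal)
    (hV : V ≤ ⁅V, B⁆) : V ≤ B := by
  obtain ⟨r, hr⟩ := hB.exists_iteratedCommutator_le
  suffices ∀ n, V ≤ iteratedCommutator B n from (this r).trans hr
  intro n
  induction n with
  | zero => exact le_top
  | succ n ih => exact hV.trans (commutator_mono ih le_rfl)

end Subgroup

lemma isNilpotent_fittingSubgroup (G : Type*) [Group G] [Finite G] :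
    Group.IsNilpotent (fittingSubgroup G) := by
  have hsup : SupClosed {N : Subgroup G | N.Normal ∧ Group.IsNilpotent N} := by
    rintro N₁ ⟨_, h₁⟩ N₂ ⟨_, h₂⟩
    exact ⟨inferInstance, isNilpotent_sup N₁ N₂ h₁ h₂⟩
  exact (hsup.sSup_mem (Set.toFinite _) ⟨normal_bot, inferInstance⟩ le_rfl).2

section Supersolvable

variable {K : Type*} [Group K]

lemma isSupersolvable_of_surjective {K' : Type*} [Group K'] (f : K →* K')
    (hf : Function.Surjective f) (h : IsSupersolvable K) : IsSupersolvable K' := by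
  obtain ⟨n, c, h0, hlast, hnormal, hstep⟩ := h
  refine ⟨n, fun i => (c i).map f, by simp [h0], by simp [hlast, map_top_of_surjective f hf],
    fun i => (hnormal i).map f hf, fun i => ⟨map_mono (hstep i).1, ?_⟩⟩
  obtain ⟨g, hg, hle⟩ := (hstep i).2
  refine ⟨f g, mem_map_of_mem f hg, ?_⟩
  simpa only [Subgroup.map_sup, MonoidHom.map_zpowers] using map_mono (f := f) hle

lemma isCyclic_of_le_sup_zpowers {N V : Subgroup K} [N.Normal] {g : K}
    (hV : V ≤ N ⊔ zpowers g) (hVN : V ⊓ N = ⊥) : IsCyclic V := by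
  set π := QuotientGroup.mk' N
  have hN : N.map π = ⊥ := (Subgroup.map_eq_bot_iff _).mpr (QuotientGroup.ker_mk' N).ge
  have himage : V.map π ≤ zpowers (π g) := by
    simpa only [Subgroup.map_sup, MonoidHom.map_zpowers, hN, bot_sup_eq] using
      map_mono (f := π) hV
  have : IsCyclic (V.map π) := isCyclic_of_le himage
  refine isCyclic_of_injective (π.subgroupMap V) ((injective_iff_map_eq_one _).mpr ?_)
  intro x hx
  have hxN : (x : K) ∈ N := (QuotientGroup.eq_one_iff _).mp (congrArg Subtype.val hx)
  have hx' : (x : K) ∈ V ⊓ N := ⟨x.2, hxN⟩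
  rw [hVN, mem_bot] at hx'
  exact Subtype.ext hx'

lemma IsSupersolvable.isCyclic_of_minimal (hK : IsSupersolvable K) {V : Subgroup K}
    (hV : Minimal (fun Z : Subgroup K => Z.Normal ∧ Z ≠ ⊥) V) : IsCyclic V := by
  obtain ⟨n, c, h0, hlast, hnormal, hstep⟩ := hK
  have := hV.1.1
  have hdich : ∀ i, V ⊓ c i = ⊥ ∨ V ≤ c i := fun i => by
    have := hnormal i
    by_cases h : V ⊓ c i = ⊥
    · exact .inl h
    · exact .inr (inf_eq_left.mp (hV.eq_of_le ⟨inferInstance, h⟩ inf_le_left))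
  suffices ∀ i, V ⊓ c i = ⊥ ∨ IsCyclic V by
    refine (this (Fin.last n)).resolve_left fun h => hV.1.2 ?_
    rwa [hlast, inf_top_eq] at h
  intro i
  induction i using Fin.induction with
  | zero => exact .inl (by rw [h0, inf_bot_eq])
  | succ i ih =>
    refine ih.elim (fun hVi => (hdich i.succ).imp_right fun hVi' => ?_) .inr
    obtain ⟨g, -, hg⟩ := (hstep i).2
    have := hnormal i.castSucc
    exact isCyclic_of_le_sup_zpowers (hVi'.trans hg) hVi

def CyclicNormalSeriesFrom (D : Subgroup K) : Prop :=
  ∃ (n : ℕ) (c : Fin (n + 1) → Subgroup K),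
    c 0 = D ∧ c (Fin.last n) = ⊤ ∧
    (∀ i, (c i).Normal) ∧
    ∀ i : Fin n, c i.castSucc ≤ c i.succ ∧
      ∃ g ∈ c i.succ, c i.succ ≤ c i.castSucc ⊔ Subgroup.zpowers g

lemma cyclicNormalSeriesFrom_top : CyclicNormalSeriesFrom (⊤ : Subgroup K) :=
  ⟨0, fun _ => ⊤, rfl, rfl, fun _ => normal_top, fun i => i.elim0⟩

lemma CyclicNormalSeriesFrom.cons {D : Subgroup K} [D.Normal] {g : K}
    (h : CyclicNormalSeriesFrom (D ⊔ zpowers g)) : CyclicNormalSeriesFrom D := by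
  obtain ⟨n, c, h0, hlast, hnormal, hstep⟩ := h
  refine ⟨n + 1, Fin.cons D c, rfl, by simpa [← Fin.succ_last] using hlast, ?_, ?_⟩
  · intro i
    induction i using Fin.cases with
    | zero => simpa
    | succ i => simpa using hnormal i
  · intro i
    induction i using Fin.cases with
    | zero =>
      simp only [Fin.castSucc_zero, Fin.cons_zero, Fin.cons_succ, h0]
      exact ⟨le_sup_left, g, mem_sup_right (mem_zpowers g), le_rfl⟩
    | succ i => simpa [← Fin.succ_castSucc] using hstep i

lemma isSupersolvable_of_forall_quotient [Finite K]
    (h : ∀ (D : Subgroup K) [D.Normal], D ≠ ⊤ →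
      ∃ q : K ⧸ D, q ≠ 1 ∧ (zpowers q).Normal) :
    IsSupersolvable K := by
  suffices ∀ D : Subgroup K, D.Normal → CyclicNormalSeriesFrom D from this ⊥ normal_bot
  intro D
  induction D using WellFoundedGT.induction with
  | _ D ih =>
    intro hD
    obtain rfl | hDtop := eq_or_ne D ⊤
    · exact cyclicNormalSeriesFrom_top
    obtain ⟨q, hq1, hq⟩ := h D hDtop
    obtain ⟨g, rfl⟩ := QuotientGroup.mk'_surjective D q
    have hE : (zpowers (QuotientGroup.mk' D g)).comap (QuotientGroup.mk' D) = D ⊔ zpowers g := by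
      rw [← MonoidHom.map_zpowers, comap_map_eq, QuotientGroup.ker_mk', sup_comm]
    have hgD : ¬ zpowers g ≤ D := fun hg =>
      hq1 ((QuotientGroup.eq_one_iff g).mpr (zpowers_le.mp hg))
    exact (ih _ (left_lt_sup.mpr hgD) (hE ▸ hq.comap _)).cons

end Supersolvable

section MinimalNormal

variable {Q : Type*} [Group Q] {B M V : Subgroup Q}

lemma commutator_eq_bot_of_minimal_of_isNilpotent [M.Normal] (hM : Group.IsNilpotent M)
    (hV : Minimal (fun Z : Subgroup Q => Z.Normal ∧ Z ≠ ⊥) V) : ⁅V, M⁆ = ⊥ := by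
  have := hV.1.1
  by_contra hVM
  have hle : V ≤ ⁅V, M⁆ := (hV.eq_of_le ⟨inferInstance, hVM⟩ (commutator_le_left V M)).ge
  have hlcs : ∀ n, V ≤ M.lowerCentralSeries n := by
    intro n
    induction n with
    | zero => exact hle.trans (commutator_le_right V M)
    | succ n ih => exact hle.trans (commutator_mono ih le_rfl)
  obtain ⟨n, hn⟩ := (isNilpotent_iff_lowerCentralSeries M).mp hM
  exact hV.1.2 (le_bot_iff.mp (hn ▸ hlcs n))

lemma le_normalizer_of_commutator_eq_bot {X Z : Subgroup Q} (hVX : ⁅V, X⁆ = ⊥)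
    (hZ : Z ≤ V) : X ≤ normalizer (Z : Set Q) := by
  rw [commutator_comm, commutator_eq_bot_iff_le_centralizer] at hVX
  exact hVX.trans ((centralizer_le hZ).trans (centralizer_le_normalizer _))

lemma normal_of_le_of_le_normalizer (hVM : ⁅V, M⁆ = ⊥) (hBM : B ⊔ M = ⊤) {Z : Subgroup Q}
    (hZ : Z ≤ V) (hB : B ≤ normalizer (Z : Set Q)) : Z.Normal := by
  rw [← normalizer_eq_top_iff, ← top_le_iff, ← hBM]
  exact sup_le hB (le_normalizer_of_commutator_eq_bot hVM hZ)

lemma minimal_subgroupOf (hVB : V ≤ B)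
    (hV : Minimal (fun Z : Subgroup Q => Z.Normal ∧ Z ≠ ⊥) V)
    (hnormal : ∀ Z ≤ V, B ≤ normalizer (Z : Set Q) → Z.Normal) :
    Minimal (fun Z : Subgroup B => Z.Normal ∧ Z ≠ ⊥) (V.subgroupOf B) := by
  have := hV.1.1
  refine ⟨⟨normal_subgroupOf, fun h => hV.1.2 ?_⟩, fun Z ⟨hZ, hZbot⟩ hZV => ?_⟩
  · rwa [subgroupOf_eq_bot, disjoint_of_le_iff_left_eq_bot hVB] at h
  have hZV' : Z.map B.subtype ≤ V := (map_mono hZV).trans (by simp)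
  have hZB : B ≤ normalizer (Z.map B.subtype : Set Q) := by
    have := le_normalizer_map (H := Z) B.subtype
    rwa [normalizer_eq_top_iff.mpr hZ, ← MonoidHom.range_eq_map, range_subtype] at this
  have hZ' : Z.map B.subtype ≠ ⊥ := by
    rwa [Ne, map_eq_bot_iff_of_injective _ B.subtype_injective]
  have hVZ := hV.eq_of_le ⟨hnormal _ hZV' hZB, hZ'⟩ hZV'
  rw [← hVZ]
  exact (comap_map_eq_self_of_injective B.subtype_injective Z).le

lemma isCyclic_of_minimal_of_sup_eq_top (hVM : ⁅V, M⁆ = ⊥) (hBM : B ⊔ M = ⊤)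
    (hB : B.IsSubnormal) (hBs : IsSupersolvable B)
    (hV : Minimal (fun Z : Subgroup Q => Z.Normal ∧ Z ≠ ⊥) V) : IsCyclic V := by
  have hnormal := fun Z (hZ : Z ≤ V) => normal_of_le_of_le_normalizer hVM hBM hZ
  have := hV.1.1
  obtain hVB | hVB := eq_or_ne ⁅V, B⁆ ⊥
  · obtain ⟨v, hvV, hv⟩ := (bot_or_exists_ne_one V).resolve_left hV.1.2
    have hvV' : zpowers v ≤ V := zpowers_le.mpr hvV
    have hv' := hnormal _ hvV' (le_normalizer_of_commutator_eq_bot hVB hvV')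
    rw [← hV.eq_of_le ⟨hv', zpowers_ne_bot.mpr hv⟩ hvV']
    infer_instance
  · have hcomm := hnormal _ (commutator_le_left V B) (normalizer_commutator_ge_right V B)
    have hle : V ≤ ⁅V, B⁆ := (hV.eq_of_le ⟨hcomm, hVB⟩ (commutator_le_left V B)).ge
    have hVB' := hB.le_of_le_commutator hle
    have := hBs.isCyclic_of_minimal (minimal_subgroupOf hVB' hV hnormal)
    exact isCyclic_of_surjective (subgroupOfEquivOfLe hVB') (subgroupOfEquivOfLe hVB').surjective

lemma exists_ne_one_normal_zpowers [Finite Q] [Nontrivial Q] [M.Normal]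
    (hM : Group.IsNilpotent M) (hBM : B ⊔ M = ⊤) (hB : B.IsSubnormal)
    (hBs : IsSupersolvable B) : ∃ q : Q, q ≠ 1 ∧ (zpowers q).Normal := by
  obtain ⟨V, -, hV⟩ := exists_minimal_le_of_wellFoundedLT
    (fun Z : Subgroup Q => Z.Normal ∧ Z ≠ ⊥) ⊤ ⟨normal_top, top_ne_bot⟩
  have := isCyclic_of_minimal_of_sup_eq_top
    (commutator_eq_bot_of_minimal_of_isNilpotent hM hV) hBM hB hBs hV
  obtain ⟨v, hv⟩ := (V.isCyclic_iff_exists_zpowers_eq_top).mp this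
  refine ⟨v, fun h => hV.1.2 ?_, hv ▸ hV.1.1⟩
  rw [← hv, h, zpowers_one_eq_bot]

end MinimalNormal

theorem isSupersolvable_of_sup_eq_top {K : Type*} [Group K] [Finite K] {B M : Subgroup K}
    [M.Normal] (hM : Group.IsNilpotent M) (hBM : B ⊔ M = ⊤) (hB : B.IsSubnormal)
    (hBs : IsSupersolvable B) : IsSupersolvable K := by
  refine isSupersolvable_of_forall_quotient fun D _ hD => ?_
  have : Nontrivial (K ⧸ D) := QuotientGroup.nontrivial_iff.mpr hD
  set π := QuotientGroup.mk' D
  have hπ : Function.Surjective π := QuotientGroup.mk'_surjective D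
  have : (M.map π).Normal := Normal.map inferInstance π hπ
  exact exists_ne_one_normal_zpowers (B := B.map π) (M := M.map π)
    (Group.nilpotent_of_surjective (π.subgroupMap M) (π.subgroupMap_surjective M))
    (by rw [← Subgroup.map_sup, hBM, map_top_of_surjective π hπ]) (hB.map hπ)
    (isSupersolvable_of_surjective (π.subgroupMap B) (π.subgroupMap_surjective B) hBs)

-- `AG'` is the join `A ⊔ G'`, as `G'` is normal.
theorem stmt_14_general {G : Type*} [Group G] [Finite G] (A : Subgroup G)
    (hA : A.IsSubnormal') (hAs : IsSupersolvable A)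
    (hG' : commutator G ≤ fittingSubgroup G) :
    IsSupersolvable ↥(A ⊔ commutator G) := by
  have hA' : A ≤ A ⊔ commutator G := le_sup_left
  have hG'' : commutator G ≤ A ⊔ commutator G := le_sup_right
  have : Group.IsNilpotent (commutator G) := isNilpotent_of_le hG' (isNilpotent_fittingSubgroup G)
  refine isSupersolvable_of_sup_eq_top (B := A.subgroupOf _) (M := (commutator G).subgroupOf _)
    ?_ ?_ hA.isSubnormal_s14.subgroupOf ?_
  · exact Group.nilpotent_of_mulEquiv (subgroupOfEquivOfLe hG'').symm
  · rw [← subgroupOf_sup hA' hG'', subgroupOf_self]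
  · exact isSupersolvable_of_surjective (subgroupOfEquivOfLe hA').symm.toMonoidHom
      (subgroupOfEquivOfLe hA').symm.surjective hAs

/-- If `A` is a supersoluble subnormal subgroup of a finite group `G` with
`G' ≤ F(G)` and `AG'` normal in `G`, then `AG'` is supersoluble.  (Since `G'`
is normal, the product `AG'` equals the join `A ⊔ G'`.) -/
theorem stmt_14 {G : Type*} [Group G] [Finite G] (A : Subgroup G)
    (hA : A.IsSubnormal') (hAs : IsSupersolvable A)
    (hG' : commutator G ≤ fittingSubgroup G)
    (hnorm : (A ⊔ commutator G).Normal) :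
    IsSupersolvable ↥(A ⊔ commutator G) :=
  stmt_14_general A hA hAs hG'
end
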